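/- arXiv:2112.13358 — 6 statements merged into one kernel-verified Lean document; each statement's English description precedes it below -/
import Mathlib

section
/- Let a : ℝ → ℝ satisfy A₀ ≥ a(x) ≥ a₀ > 0 a.e., let V ∈ L¹_loc(ℝ), and set L = -∂ₓ(a ∂ₓ) + V. If ψ is locally Lipschitz on ℝ with ψ > 0 everywhere, then for every η ∈ C_c^∞(ℝ), writing η̂ = η/ψ, one has the Hardy decomposition identity ⟨Lη, η⟩ = ⟨Lψ, ψ η̂²⟩ + ∫_ℝ a(x) ψ(x)² (∂ₓη̂(x))² dx, where ⟨·,·⟩ denotes the H⁻¹–H¹ duality pairing, i.e. ⟨Lu,v⟩ = ∫ (a ∂ₓu ∂ₓv + V u v) dx interpreted distributionally. -/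
open Real MeasureTheory Filter Set Topology

/-- Hardy's decomposition: for `L = -∂ₓ(a ∂ₓ·) + V`, a locally Lipschitz positive `ψ`,
and a test function `η ∈ C_c^∞(ℝ)`, writing `η̂ = η/ψ`, one has
`⟨Lη, η⟩ = ⟨Lψ, ψ η̂²⟩ + ∫ a ψ² (∂ₓη̂)²`, where the pairings are
`⟨Lu, w⟩ = ∫ (a ∂ₓu ∂ₓw + V u w)`. -/
theorem statement1 (a V ψ ψ' η η' : ℝ → ℝ) (A₀ a₀ : ℝ) (ha₀ : 0 < a₀)
    (hameas : Measurable a)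
    (hbd : ∀ᵐ x, a₀ ≤ a x ∧ a x ≤ A₀)
    (hV : LocallyIntegrable V)
    (hψlip : ∀ K : Set ℝ, IsCompact K → ∃ L, LipschitzOnWith L ψ K)
    (hψpos : ∀ x, 0 < ψ x)
    (hψ' : ∀ᵐ x, HasDerivAt ψ (ψ' x) x)
    (hη : ContDiff ℝ (⊤ : ℕ∞) η) (hηc : HasCompactSupport η)
    (hη' : ∀ x, HasDerivAt η (η' x) x) :
    (∫ x, (a x * η' x * η' x + V x * η x * η x)) =
      (∫ x, (a x * ψ' x *
          (ψ' x * (η x / ψ x) ^ 2 + ψ x * (2 * (η x / ψ x) *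
            ((η' x * ψ x - η x * ψ' x) / ψ x ^ 2)))
        + V x * ψ x * (ψ x * (η x / ψ x) ^ 2)))
      + ∫ x, a x * ψ x ^ 2 * ((η' x * ψ x - η x * ψ' x) / ψ x ^ 2) ^ 2 := by
  -- notation for the three integrands
  set B : ℝ → ℝ := fun x => a x * ψ' x *
      (ψ' x * (η x / ψ x) ^ 2 + ψ x * (2 * (η x / ψ x) *
        ((η' x * ψ x - η x * ψ' x) / ψ x ^ 2))) with hBdef
  set C : ℝ → ℝ := fun x => a x * ψ x ^ 2 * ((η' x * ψ x - η x * ψ' x) / ψ x ^ 2) ^ 2 with hCdef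
  have hψne : ∀ x, ψ x ≠ 0 := fun x => (hψpos x).ne'
  -- η' is the derivative of η, so it is continuous and supported in tsupport η
  have hη'eq : η' = deriv η := funext fun x => ((hη' x).deriv).symm
  have hη'cont : Continuous η' := hη'eq ▸ hη.continuous_deriv (by simp)
  have hηcont : Continuous η := hη.continuous
  set K : Set ℝ := tsupport η with hKdef
  have hK : IsCompact K := hηc
  have hη0 : ∀ x ∉ K, η x = 0 := fun x hx => image_eq_zero_of_notMem_tsupport hx
  have hη'0 : ∀ x ∉ K, η' x = 0 := by
    intro x hx
    rw [hη'eq]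
    by_contra h
    exact hx (support_deriv_subset (Function.mem_support.2 h))
  -- ψ is continuous
  have hψcont : Continuous ψ := by
    rw [continuous_iff_continuousAt]
    intro x
    obtain ⟨L, hL⟩ := hψlip (Metric.closedBall x 1) (isCompact_closedBall x 1)
    exact hL.continuousOn.continuousAt (Metric.closedBall_mem_nhds x one_pos)
  -- Lipschitz constant on a thickening of K
  obtain ⟨L, hL⟩ := hψlip (Metric.cthickening 1 K) (hK.cthickening)
  have hψ'bd : ∀ᵐ x, x ∈ K → |ψ' x| ≤ L := by
    filter_upwards [hψ'] with x hx hxK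
    have hmem : Metric.cthickening 1 K ∈ nhds x :=
      Filter.mem_of_superset (Metric.ball_mem_nhds x one_pos)
        ((Metric.ball_subset_thickening hxK 1).trans (Metric.thickening_subset_cthickening 1 K))
    simpa using hx.hasFDerivAt.le_of_lipschitzOn hmem hL
  -- lower bound for ψ on K
  have hc : ∃ c > 0, ∀ x ∈ K, c ≤ ψ x := by
    rcases K.eq_empty_or_nonempty with h | h
    · exact ⟨1, one_pos, fun x hx => absurd hx (h ▸ notMem_empty x)⟩
    · obtain ⟨x₀, hx₀, hmin⟩ := hK.exists_isMinOn h hψcont.continuousOn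
      exact ⟨ψ x₀, hψpos x₀, fun x hx => hmin hx⟩
  obtain ⟨c, hcpos, hclb⟩ := hc
  -- upper bounds on K
  obtain ⟨M₁, hM₁⟩ := hK.exists_bound_of_continuousOn hηcont.continuousOn
  obtain ⟨M₂, hM₂⟩ := hK.exists_bound_of_continuousOn hη'cont.continuousOn
  obtain ⟨M₃, hM₃⟩ := hK.exists_bound_of_continuousOn hψcont.continuousOn
  -- global crude constant
  set Q : ℝ := max 1 (max |A₀| (max L (max M₁ (max M₂ (max M₃ c⁻¹))))) with hQdef
  have hQ1 : (1 : ℝ) ≤ Q := le_max_left _ _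
  have hQ0 : (0 : ℝ) ≤ Q := zero_le_one.trans hQ1
  have hQA : |A₀| ≤ Q := le_trans (le_max_left _ _) (le_max_right _ _)
  have hQL : L ≤ Q := le_trans (le_trans (le_max_left _ _) (le_max_right _ _)) (le_max_right _ _)
  have hQM₁ : M₁ ≤ Q := le_trans (le_trans (le_trans (le_max_left _ _) (le_max_right _ _))
    (le_max_right _ _)) (le_max_right _ _)
  have hQM₂ : M₂ ≤ Q := le_trans (le_trans (le_trans (le_trans (le_max_left _ _)
    (le_max_right _ _)) (le_max_right _ _)) (le_max_right _ _)) (le_max_right _ _)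
  have hQM₃ : M₃ ≤ Q := le_trans (le_trans (le_trans (le_trans (le_trans (le_max_left _ _)
    (le_max_right _ _)) (le_max_right _ _)) (le_max_right _ _)) (le_max_right _ _))
    (le_max_right _ _)
  have hQc : c⁻¹ ≤ Q := le_trans (le_trans (le_trans (le_trans (le_trans (le_max_right _ _)
    (le_max_right _ _)) (le_max_right _ _)) (le_max_right _ _)) (le_max_right _ _))
    (le_max_right _ _)
  -- bounds for x ∈ K
  have hbds : ∀ x ∈ K, |η x| ≤ Q ∧ |η' x| ≤ Q ∧ |ψ x| ≤ Q ∧ |(ψ x)⁻¹| ≤ Q := by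
    intro x hx
    have h1 : c ≤ ψ x := hclb x hx
    have hinv : (ψ x)⁻¹ ≤ c⁻¹ := by
      apply inv_anti₀ hcpos h1
    refine ⟨(hM₁ x hx).trans hQM₁, (hM₂ x hx).trans hQM₂, (hM₃ x hx).trans hQM₃, ?_⟩
    rw [abs_of_pos (inv_pos.2 (hψpos x))]
    exact hinv.trans hQc
  -- bounds for u = η/ψ and v = (η'ψ - ηψ')/ψ² on K (a.e. in x for v)
  have huv : ∀ᵐ x, x ∈ K →
      |η x / ψ x| ≤ Q ^ 2 ∧ |(η' x * ψ x - η x * ψ' x) / ψ x ^ 2| ≤ 2 * Q ^ 4 := by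
    filter_upwards [hψ'bd] with x hψ'x hx
    obtain ⟨h1, h2, h3, h4⟩ := hbds x hx
    have hψ'Q : |ψ' x| ≤ Q := (hψ'x hx).trans hQL
    constructor
    · rw [div_eq_mul_inv, abs_mul]
      calc |η x| * |(ψ x)⁻¹| ≤ Q * Q :=
            mul_le_mul h1 h4 (abs_nonneg _) hQ0
        _ = Q ^ 2 := by ring
    · rw [div_eq_mul_inv, abs_mul]
      have hnum : |η' x * ψ x - η x * ψ' x| ≤ Q * Q + Q * Q := by
        calc |η' x * ψ x - η x * ψ' x| ≤ |η' x * ψ x| + |η x * ψ' x| := abs_sub _ _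
          _ = |η' x| * |ψ x| + |η x| * |ψ' x| := by rw [abs_mul, abs_mul]
          _ ≤ Q * Q + Q * Q := add_le_add (mul_le_mul h2 h3 (abs_nonneg _) hQ0)
              (mul_le_mul h1 hψ'Q (abs_nonneg _) hQ0)
      have hden : |(ψ x ^ 2)⁻¹| ≤ Q * Q := by
        rw [← inv_pow, abs_pow, sq]
        exact mul_le_mul h4 h4 (abs_nonneg _) hQ0
      calc |η' x * ψ x - η x * ψ' x| * |(ψ x ^ 2)⁻¹| ≤ (Q * Q + Q * Q) * (Q * Q) :=
            mul_le_mul hnum hden (abs_nonneg _) (by positivity)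
        _ = 2 * Q ^ 4 := by ring
  -- a is bounded a.e.
  have haQ : ∀ᵐ x, |a x| ≤ Q := by
    filter_upwards [hbd] with x ⟨h1, h2⟩
    have : |a x| = a x := abs_of_pos (lt_of_lt_of_le ha₀ h1)
    rw [this]
    exact h2.trans ((le_abs_self A₀).trans hQA)
  -- measurability of ψ'
  have hmψ' : AEMeasurable ψ' := by
    apply (measurable_deriv ψ).aemeasurable.congr
    filter_upwards [hψ'] with x hx using hx.deriv
  have hBmeas : AEStronglyMeasurable B volume := by
    apply AEMeasurable.aestronglyMeasurable
    apply ((hameas.aemeasurable.mul hmψ').mul _)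
    apply AEMeasurable.add
    · exact hmψ'.mul (((hηcont.measurable.aemeasurable).div
        hψcont.measurable.aemeasurable).pow aemeasurable_const)
    · apply hψcont.measurable.aemeasurable.mul
      apply AEMeasurable.mul
      · exact (aemeasurable_const.mul ((hηcont.measurable.aemeasurable).div
          hψcont.measurable.aemeasurable))
      · exact ((hη'cont.measurable.aemeasurable.mul hψcont.measurable.aemeasurable).sub
          (hηcont.measurable.aemeasurable.mul hmψ')).div
          (hψcont.measurable.aemeasurable.pow aemeasurable_const)
  have hCmeas : AEStronglyMeasurable C volume := by
    apply AEMeasurable.aestronglyMeasurable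
    apply (hameas.aemeasurable.mul
      (hψcont.measurable.aemeasurable.pow aemeasurable_const)).mul
    exact (((hη'cont.measurable.aemeasurable.mul hψcont.measurable.aemeasurable).sub
      (hηcont.measurable.aemeasurable.mul hmψ')).div
      (hψcont.measurable.aemeasurable.pow aemeasurable_const)).pow aemeasurable_const
  -- integrability of B
  set D : ℝ := Q * Q * (Q * (Q ^ 2) ^ 2 + Q * (2 * Q ^ 2 * (2 * Q ^ 4))) with hDdef
  have hDnn : 0 ≤ D := by positivity
  have hindD : Integrable (K.indicator fun _ => D) := by
    rw [integrable_indicator_iff hK.measurableSet]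
    exact integrableOn_const hK.measure_lt_top.ne
  have hB : Integrable B := by
    apply Integrable.mono' hindD hBmeas
    filter_upwards [huv, haQ, hψ'bd] with x hx haQx hψ'x
    by_cases hxK : x ∈ K
    · obtain ⟨hu, hv⟩ := hx hxK
      rw [indicator_of_mem hxK]
      have hψ'Q : |ψ' x| ≤ Q := (hψ'x hxK).trans hQL
      have h3 : |ψ x| ≤ Q := (hbds x hxK).2.2.1
      have h2u : |2 * (η x / ψ x)| ≤ 2 * Q ^ 2 := by
        rw [abs_mul, abs_two]
        exact mul_le_mul_of_nonneg_left hu (by norm_num)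
      have hinner : |ψ' x * (η x / ψ x) ^ 2 + ψ x * (2 * (η x / ψ x) *
          ((η' x * ψ x - η x * ψ' x) / ψ x ^ 2))| ≤ Q * (Q ^ 2) ^ 2 + Q * (2 * Q ^ 2 * (2 * Q ^ 4)) := by
        refine (abs_add_le _ _).trans (add_le_add ?_ ?_)
        · rw [abs_mul, abs_pow]
          exact mul_le_mul hψ'Q (pow_le_pow_left₀ (abs_nonneg _) hu 2) (by positivity) hQ0
        · rw [abs_mul, abs_mul]
          exact mul_le_mul h3 (mul_le_mul h2u hv (abs_nonneg _) (by positivity))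
            (by positivity) hQ0
      have hBx : ‖B x‖ = |a x| * |ψ' x| * |ψ' x * (η x / ψ x) ^ 2 + ψ x * (2 * (η x / ψ x) *
          ((η' x * ψ x - η x * ψ' x) / ψ x ^ 2))| := by
        simp only [hBdef, Real.norm_eq_abs, abs_mul]
      rw [hBx]
      exact mul_le_mul (mul_le_mul haQx hψ'Q (abs_nonneg _) hQ0) hinner
        (abs_nonneg _) (by positivity)
    · rw [indicator_of_notMem hxK]
      have h0 : η x = 0 := hη0 x hxK
      have h0' : η' x = 0 := hη'0 x hxK
      simp [hBdef, h0, h0']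
  -- integrability of C
  set D' : ℝ := Q * Q ^ 2 * (2 * Q ^ 4) ^ 2 with hD'def
  have hindD' : Integrable (K.indicator fun _ => D') := by
    rw [integrable_indicator_iff hK.measurableSet]
    exact integrableOn_const hK.measure_lt_top.ne
  have hC : Integrable C := by
    apply Integrable.mono' hindD' hCmeas
    filter_upwards [huv, haQ] with x hx haQx
    by_cases hxK : x ∈ K
    · obtain ⟨hu, hv⟩ := hx hxK
      rw [indicator_of_mem hxK]
      have h3 : |ψ x| ≤ Q := (hbds x hxK).2.2.1
      calc ‖C x‖ = |a x| * |ψ x| ^ 2 * |(η' x * ψ x - η x * ψ' x) / ψ x ^ 2| ^ 2 := by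
            simp only [hCdef, Real.norm_eq_abs, abs_mul, abs_pow]
        _ ≤ Q * Q ^ 2 * (2 * Q ^ 4) ^ 2 := by
            refine mul_le_mul (mul_le_mul haQx (pow_le_pow_left₀ (abs_nonneg _) h3 2)
              (by positivity) hQ0) (pow_le_pow_left₀ (abs_nonneg _) hv 2) (by positivity)
              (by positivity)
        _ = D' := rfl
    · rw [indicator_of_notMem hxK]
      have h0 : η x = 0 := hη0 x hxK
      have h0' : η' x = 0 := hη'0 x hxK
      simp [hCdef, h0, h0']
  -- integrability of the V-term
  have hW : Integrable (fun x => V x * η x * η x) := by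
    have := hV.integrable_smul_left_of_hasCompactSupport (hηcont.mul hηcont) hηc.mul_left
    exact this.congr (Filter.Eventually.of_forall fun x => by simp only [smul_eq_mul, Pi.mul_apply]; ring)
  -- the full right-hand integrands
  have hR : Integrable (fun x => B x + V x * ψ x * (ψ x * (η x / ψ x) ^ 2)) := by
    apply (hB.add hW).congr
    apply Filter.Eventually.of_forall
    intro x
    have h := hψne x
    show B x + V x * η x * η x = B x + V x * ψ x * (ψ x * (η x / ψ x) ^ 2)
    have : V x * ψ x * (ψ x * (η x / ψ x) ^ 2) = V x * η x * η x := by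
      field_simp
    rw [this]
  -- pointwise identity
  have key : ∀ x, a x * η' x * η' x + V x * η x * η x =
      (B x + V x * ψ x * (ψ x * (η x / ψ x) ^ 2)) + C x := by
    intro x
    have h := hψne x
    simp only [hBdef, hCdef]
    field_simp
    ring
  calc (∫ x, (a x * η' x * η' x + V x * η x * η x))
      = ∫ x, ((B x + V x * ψ x * (ψ x * (η x / ψ x) ^ 2)) + C x) := by
        exact integral_congr_ae (Filter.Eventually.of_forall key)
    _ = (∫ x, (B x + V x * ψ x * (ψ x * (η x / ψ x) ^ 2))) + ∫ x, C x :=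
        integral_add hR hC
end

section
/- The function (v, w) ↦ v²/(1 − w²) is convex on ℝ × (−1, 1). -/
open Set

/-- The function `(v, w) ↦ v² / (1 − w²)` is convex on `ℝ × (−1, 1)`. -/
theorem statement3 :
    ConvexOn ℝ ((Set.univ : Set ℝ) ×ˢ Set.Ioo (-1 : ℝ) 1)
      (fun p : ℝ × ℝ => p.1 ^ 2 / (1 - p.2 ^ 2)) := by
  constructor
  · exact convex_univ.prod (convex_Ioo _ _)
  · rintro ⟨v₁, w₁⟩ ⟨-, hw₁l, hw₁r⟩ ⟨v₂, w₂⟩ ⟨-, hw₂l, hw₂r⟩ a b ha hb hab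
    simp only at hw₁l hw₁r hw₂l hw₂r
    simp only [Prod.smul_mk, Prod.mk_add_mk, smul_eq_mul]
    have h1 : (0:ℝ) < 1 - w₁ ^ 2 := by nlinarith
    have h2 : (0:ℝ) < 1 - w₂ ^ 2 := by nlinarith
    have hs : 0 < a * (1 - w₁ ^ 2) + b * (1 - w₂ ^ 2) := by
      rcases ha.lt_or_eq with h | h
      · have := mul_pos h h1
        nlinarith [mul_nonneg hb h2.le]
      · have hb1 : b = 1 := by linarith [hab, h]
        rw [← h, hb1]
        nlinarith
    have h3 : a * (1 - w₁ ^ 2) + b * (1 - w₂ ^ 2) ≤ 1 - (a * w₁ + b * w₂) ^ 2 := by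
      nlinarith [sq_nonneg (w₁ - w₂), mul_nonneg ha hb]
    calc (a * v₁ + b * v₂) ^ 2 / (1 - (a * w₁ + b * w₂) ^ 2)
        ≤ (a * v₁ + b * v₂) ^ 2 / (a * (1 - w₁ ^ 2) + b * (1 - w₂ ^ 2)) := by
          exact div_le_div_of_nonneg_left (sq_nonneg _) hs h3
      _ ≤ a * (v₁ ^ 2 / (1 - w₁ ^ 2)) + b * (v₂ ^ 2 / (1 - w₂ ^ 2)) := by
          rw [div_le_iff₀ hs, ← sub_nonneg]
          have e : (a * (v₁ ^ 2 / (1 - w₁ ^ 2)) + b * (v₂ ^ 2 / (1 - w₂ ^ 2))) *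
                (a * (1 - w₁ ^ 2) + b * (1 - w₂ ^ 2)) - (a * v₁ + b * v₂) ^ 2 =
              a * b * ((1 - w₁ ^ 2) * v₂ - (1 - w₂ ^ 2) * v₁) ^ 2 /
                ((1 - w₁ ^ 2) * (1 - w₂ ^ 2)) := by
            field_simp
            ring
          rw [e]
          positivity
end

section
/- Let a : ℝ → ℝ satisfy a(x) ≥ 1 for a.e. x. Then for every φ̂ ∈ Ḣ¹(ℝ) (locally absolutely continuous with ∂ₓφ̂ ∈ L²) satisfying lim_{x→±∞} φ̂(x) = ±π/2, one has G(φ̂) = ∫_ℝ (a(x)(∂ₓφ̂)² + a(x) cos²φ̂) dx ≥ 4. -/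
/-!
Pointwise, `φ'² + cos² φ ≥ 2 |cos φ · φ'|`, and `2 cos φ · φ'` is the derivative of
`2 sin φ`. Integrating over `[-R, R]` bounds the energy below by `2 sin φ(R) - 2 sin φ(-R)`,
which tends to `2 - (-2) = 4` as `R → ∞`; the weight `a ≥ 1` only increases the energy.
-/

open Real MeasureTheory Filter Set Topology

lemma integrableOn_Icc_of_integrable_sq {f : ℝ → ℝ} (hf : AEStronglyMeasurable f)
    (hf2 : Integrable (fun x => f x ^ 2)) (u v : ℝ) : IntegrableOn f (Icc u v) :=
  haveI : IsFiniteMeasure (volume.restrict (Icc u v)) := by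
    rw [isFiniteMeasure_restrict]; exact measure_Icc_lt_top.ne
  (((memLp_two_iff_integrable_sq hf).2 hf2).restrict _).integrable one_le_two

lemma abs_two_mul_mul_le_sq_add_sq (c d : ℝ) : |2 * c * d| ≤ d ^ 2 + c ^ 2 := by
  simpa only [abs_mul, abs_two, sq_abs, mul_assoc, add_comm] using two_mul_le_add_sq |c| |d|

lemma integral_two_mul_cos_mul_deriv {φ φ' : ℝ → ℝ} {u v : ℝ}
    (hφ : ∀ x ∈ uIcc u v, HasDerivAt φ (φ' x) x) (hφ' : IntervalIntegrable φ' volume u v) :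
    ∫ x in u..v, 2 * cos (φ x) * φ' x = 2 * sin (φ v) - 2 * sin (φ u) := by
  have hcos : ContinuousOn (fun x => 2 * cos (φ x)) (uIcc u v) :=
    continuousOn_const.mul <| continuous_cos.comp_continuousOn fun x hx =>
      (hφ x hx).continuousAt.continuousWithinAt
  refine intervalIntegral.integral_eq_sub_of_hasDerivAt (f := fun x => 2 * sin (φ x))
    (fun x hx => ?_) (hφ'.continuousOn_mul hcos)
  simpa only [mul_assoc] using ((hφ x hx).sin).const_mul 2

lemma two_mul_sin_sub_le_lintegral {φ φ' : ℝ → ℝ} {u v : ℝ} (huv : u ≤ v)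
    (hφ : ∀ x ∈ Icc u v, HasDerivAt φ (φ' x) x) (hφ' : IntegrableOn φ' (Icc u v)) :
    ENNReal.ofReal (2 * sin (φ v) - 2 * sin (φ u)) ≤
      ∫⁻ x in Icc u v, ENNReal.ofReal (φ' x ^ 2 + cos (φ x) ^ 2) := by
  rw [← uIcc_of_le huv] at hφ
  have hint : IntervalIntegrable φ' volume u v :=
    (intervalIntegrable_iff_integrableOn_Icc_of_le huv).2 hφ'
  calc ENNReal.ofReal (2 * sin (φ v) - 2 * sin (φ u))
      = ENNReal.ofReal (∫ x in Icc u v, 2 * cos (φ x) * φ' x) := by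
        rw [integral_Icc_eq_integral_Ioc, ← intervalIntegral.integral_of_le huv,
          integral_two_mul_cos_mul_deriv hφ hint]
    _ ≤ ‖∫ x in Icc u v, 2 * cos (φ x) * φ' x‖ₑ := Real.ofReal_le_enorm _
    _ ≤ ∫⁻ x in Icc u v, ‖2 * cos (φ x) * φ' x‖ₑ :=
        enorm_integral_le_lintegral_enorm _
    _ ≤ ∫⁻ x in Icc u v, ENNReal.ofReal (φ' x ^ 2 + cos (φ x) ^ 2) := by
        refine lintegral_mono fun x => ?_
        rw [Real.enorm_eq_ofReal_abs]
        exact ENNReal.ofReal_le_ofReal (abs_two_mul_mul_le_sq_add_sq _ _)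

lemma ofReal_sub_le_of_tendsto {F : ℝ → ℝ} {l l' : ℝ} {I : ENNReal}
    (hbot : Tendsto F atBot (𝓝 l)) (htop : Tendsto F atTop (𝓝 l'))
    (hF : ∀ R, 0 ≤ R → ENNReal.ofReal (F R - F (-R)) ≤ I) :
    ENNReal.ofReal (l' - l) ≤ I := by
  have hlim : Tendsto (fun R => ENNReal.ofReal (F R - F (-R))) atTop
      (𝓝 (ENNReal.ofReal (l' - l))) :=
    (ENNReal.continuous_ofReal.tendsto _).comp (htop.sub (hbot.comp tendsto_neg_atTop_atBot))
  exact le_of_tendsto hlim (eventually_atTop.2 ⟨0, hF⟩)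

/-- Bogomolny lower bound: if `a ≥ 1` a.e. and `φ̂ ∈ Ḣ¹(ℝ)` connects `−π/2` to `π/2`,
then `G(φ̂) = ∫ (a (∂ₓφ̂)² + a cos²φ̂) ≥ 4` (the energy being understood in `[0, ∞]`). -/
theorem statement4 (a φ φ' : ℝ → ℝ)
    (ha : ∀ᵐ x, 1 ≤ a x)
    (hφ : ∀ x, HasDerivAt φ (φ' x) x)
    (hL2 : Integrable (fun x => (φ' x) ^ 2))
    (htop : Tendsto φ atTop (nhds (π / 2)))
    (hbot : Tendsto φ atBot (nhds (-(π / 2)))) :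
    (4 : ENNReal) ≤ ∫⁻ x, ENNReal.ofReal (a x * (φ' x) ^ 2 + a x * Real.cos (φ x) ^ 2) := by
  have hφ'_meas : AEStronglyMeasurable φ' := by
    rw [show φ' = deriv φ from funext fun x => (hφ x).deriv.symm]
    exact (measurable_deriv φ).aestronglyMeasurable
  have hsin (l : Filter ℝ) (θ : ℝ) (h : Tendsto φ l (𝓝 θ)) :
      Tendsto (fun x => 2 * sin (φ x)) l (𝓝 (2 * sin θ)) :=
    ((continuous_sin.tendsto θ).comp h).const_mul 2
  calc (4 : ENNReal) = ENNReal.ofReal (2 * sin (π / 2) - 2 * sin (-(π / 2))) := by norm_num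
    _ ≤ ∫⁻ x, ENNReal.ofReal (φ' x ^ 2 + cos (φ x) ^ 2) :=
        ofReal_sub_le_of_tendsto (hsin _ _ hbot) (hsin _ _ htop) fun R hR =>
          (two_mul_sin_sub_le_lintegral (by linarith) (fun x _ => hφ x)
            (integrableOn_Icc_of_integrable_sq hφ'_meas hL2 _ _)).trans
          (setLIntegral_le_lintegral _ _)
    _ ≤ _ := lintegral_mono_ae <| ha.mono fun x hx => ENNReal.ofReal_le_ofReal <| by
        nlinarith [sq_nonneg (φ' x), sq_nonneg (cos (φ x))]
end

section
/- Let a : ℝ → ℝ be the even function with a = 2 on (−1,1) and a = 1 on ℝ ∖ [−1,1]. Then the infimum of G(φ̂) = ∫_ℝ (a(x)(∂ₓφ̂)² + a(x)cos²φ̂) dx over all φ̂ ∈ Ḣ¹(ℝ) with φ̂(±∞) = ±π/2 equals 4, and the infimum is not attained. -/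
open Real MeasureTheory Filter Set Topology

/-!
Completing the square, `φ'² + cos² φ = (φ' - cos φ)² + 2 (sin φ)'`, so a profile running from
`-π/2` to `π/2` has unweighted energy `4 + ∫ (φ' - cos φ)²`, and the weight adds
`∫_{(-1,1)} (φ'² + cos² φ)`. Energy `4` would force `φ' = cos φ` a.e. and `cos φ = 0` on `(-1,1)`;
then `φ` starts at an equilibrium of `φ' = cos φ`, hence is constant, which contradicts the
boundary values. The translates of the Gudermannian kink `arctan ∘ sinh` solve `φ' = cos φ`;
their excess `2 [sin φ]_{-1}^{1}` tends to `0` as the kink is moved off to infinity.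
-/

lemma measurable_of_hasDerivAt {f f' : ℝ → ℝ} (hf : ∀ x, HasDerivAt f (f' x) x) :
    Measurable f' := by
  rw [show f' = deriv f from funext fun x => (hf x).deriv.symm]
  exact measurable_deriv f

lemma continuous_of_hasDerivAt {f f' : ℝ → ℝ} (hf : ∀ x, HasDerivAt f (f' x) x) : Continuous f :=
  continuous_iff_continuousAt.2 fun x => (hf x).continuousAt

lemma integrable_of_hasDerivAt_of_nonneg_of_abs_le {g g' : ℝ → ℝ} {C : ℝ}
    (hg : ∀ x, HasDerivAt g (g' x) x) (hg'_cont : Continuous g') (hg'_nonneg : ∀ x, 0 ≤ g' x)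
    (hg_bdd : ∀ x, |g x| ≤ C) : Integrable g' := by
  refine integrable_of_intervalIntegral_norm_bounded (2 * C) (fun i => hg'_cont.integrableOn_Ioc)
    tendsto_neg_atTop_atBot tendsto_id (Eventually.of_forall fun i => ?_)
  simp_rw [id, Real.norm_of_nonneg (hg'_nonneg _)]
  rw [intervalIntegral.integral_eq_sub_of_hasDerivAt (fun x _ => hg x)
    (hg'_cont.intervalIntegrable _ _)]
  linarith [(abs_le.1 (hg_bdd i)).2, (abs_le.1 (hg_bdd (-i))).1]

lemma hasDerivAt_of_ae_eq_deriv {f f' g : ℝ → ℝ} (hf : ∀ x, HasDerivAt f (f' x) x)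
    (hg : Continuous g) (hae : f' =ᵐ[volume] g) (x : ℝ) : HasDerivAt f (g x) x := by
  have hftc : ∀ y, f y = f 0 + ∫ t in (0 : ℝ)..y, g t := fun y => by
    have hint : IntervalIntegrable f' volume 0 y :=
      (hg.intervalIntegrable 0 y).congr_ae (ae_restrict_of_ae hae.symm)
    rw [← intervalIntegral.integral_congr_ae (hae.mono fun t ht _ => ht),
      intervalIntegral.integral_eq_sub_of_hasDerivAt (fun t _ => hf t) hint]
    ring
  rw [funext hftc]
  exact ((hg.integral_hasStrictDerivAt 0 x).hasDerivAt).const_add (f 0)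

lemma eq_const_of_hasDerivAt_cos_of_cos_eq_zero {φ : ℝ → ℝ} (hφ : ∀ x, HasDerivAt φ (cos (φ x)) x)
    {x₀ : ℝ} (h₀ : cos (φ x₀) = 0) : φ = fun _ => φ x₀ :=
  ODE_solution_unique_univ (v := fun _ => cos) (s := fun _ => univ) (t₀ := x₀)
    (fun _ => lipschitzWith_cos.lipschitzOnWith) (fun x => ⟨hφ x, mem_univ _⟩)
    (fun _ => ⟨h₀ ▸ hasDerivAt_const _ _, mem_univ _⟩) rfl

section Bogomolny

variable {φ φ' : ℝ → ℝ} (hφ : ∀ x, HasDerivAt φ (φ' x) x)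
include hφ

lemma integrable_cos_mul_deriv (hint : Integrable fun x => φ' x ^ 2 + cos (φ x) ^ 2) :
    Integrable fun x => cos (φ x) * φ' x := by
  refine hint.mono' ((continuous_cos.comp (continuous_of_hasDerivAt hφ)).measurable.mul
    (measurable_of_hasDerivAt hφ)).aestronglyMeasurable (Eventually.of_forall fun x => ?_)
  rw [norm_mul, Real.norm_eq_abs, Real.norm_eq_abs]
  nlinarith [sq_nonneg (|cos (φ x)| - |φ' x|), sq_abs (cos (φ x)), sq_abs (φ' x)]

lemma integrable_deriv_sub_cos_sq (hint : Integrable fun x => φ' x ^ 2 + cos (φ x) ^ 2) :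
    Integrable fun x => (φ' x - cos (φ x)) ^ 2 :=
  (hint.sub ((integrable_cos_mul_deriv hφ hint).const_mul 2)).congr
    (Eventually.of_forall fun x => by simp only [Pi.sub_apply]; ring)

variable (htop : Tendsto φ atTop (𝓝 (π / 2))) (hbot : Tendsto φ atBot (𝓝 (-(π / 2))))
include htop hbot

lemma integral_cos_mul_deriv (hint : Integrable fun x => cos (φ x) * φ' x) :
    ∫ x, cos (φ x) * φ' x = 2 := by
  have hsin_top : Tendsto (fun x => sin (φ x)) atTop (𝓝 1) := by
    simpa [Function.comp_def] using (continuous_sin.tendsto _).comp htop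
  have hsin_bot : Tendsto (fun x => sin (φ x)) atBot (𝓝 (-1)) := by
    simpa [Function.comp_def] using (continuous_sin.tendsto _).comp hbot
  rw [integral_of_hasDerivAt_of_tendsto (fun x => (hφ x).sin) hint hsin_bot hsin_top]
  norm_num

lemma integral_sq_add_cos_sq (hint : Integrable fun x => φ' x ^ 2 + cos (φ x) ^ 2) :
    ∫ x, (φ' x ^ 2 + cos (φ x) ^ 2) = 4 + ∫ x, (φ' x - cos (φ x)) ^ 2 := by
  have hcross := integrable_cos_mul_deriv hφ hint
  calc ∫ x, (φ' x ^ 2 + cos (φ x) ^ 2)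
      = ∫ x, (2 * (cos (φ x) * φ' x) + (φ' x - cos (φ x)) ^ 2) := by congr 1 with x; ring
    _ = 2 * (∫ x, cos (φ x) * φ' x) + ∫ x, (φ' x - cos (φ x)) ^ 2 := by
      rw [integral_add (hcross.const_mul 2) (integrable_deriv_sub_cos_sq hφ hint),
        integral_const_mul]
    _ = 4 + ∫ x, (φ' x - cos (φ x)) ^ 2 := by
      rw [integral_cos_mul_deriv hφ htop hbot hcross]; norm_num

/-- Zeros of `cos` are equilibria of `φ' = cos φ`, so by uniqueness `φ` would be constant. -/
lemma cos_ne_zero_of_deriv_ae_eq_cos (hae : φ' =ᵐ[volume] fun x => cos (φ x)) (x : ℝ) :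
    cos (φ x) ≠ 0 := by
  intro hx
  have hconst := eq_const_of_hasDerivAt_cos_of_cos_eq_zero
    (hasDerivAt_of_ae_eq_deriv hφ (continuous_cos.comp (continuous_of_hasDerivAt hφ)) hae) hx
  rw [hconst] at htop hbot
  have h₁ := tendsto_nhds_unique tendsto_const_nhds htop
  have h₂ := tendsto_nhds_unique tendsto_const_nhds hbot
  linarith [pi_pos]

end Bogomolny

noncomputable def energyDensity (U : Set ℝ) [DecidablePred (· ∈ U)] (φ φ' : ℝ → ℝ) (x : ℝ) : ℝ :=
  (if x ∈ U then (2 : ℝ) else 1) * φ' x ^ 2 + (if x ∈ U then (2 : ℝ) else 1) * cos (φ x) ^ 2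

section Energy

variable {U : Set ℝ} [DecidablePred (· ∈ U)] {φ φ' : ℝ → ℝ}

lemma energyDensity_eq (x : ℝ) : energyDensity U φ φ' x =
    φ' x ^ 2 + cos (φ x) ^ 2 + U.indicator (fun y => φ' y ^ 2 + cos (φ y) ^ 2) x := by
  by_cases hx : x ∈ U
  · simp only [energyDensity, hx, ↓reduceIte, indicator_of_mem]
    ring
  · simp [energyDensity, hx]

lemma sq_add_cos_sq_le_energyDensity (x : ℝ) :
    φ' x ^ 2 + cos (φ x) ^ 2 ≤ energyDensity U φ φ' x := by
  rw [energyDensity_eq]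
  exact le_add_of_nonneg_right (indicator_nonneg (fun y _ => by positivity) x)

lemma energyDensity_nonneg (x : ℝ) : 0 ≤ energyDensity U φ φ' x :=
  (by positivity : (0 : ℝ) ≤ φ' x ^ 2 + cos (φ x) ^ 2).trans (sq_add_cos_sq_le_energyDensity x)

variable (hφ : ∀ x, HasDerivAt φ (φ' x) x)
include hφ

lemma integrable_sq_add_cos_sq_of_lintegral_ne_top
    (hfin : ∫⁻ x, ENNReal.ofReal (energyDensity U φ φ' x) ≠ ⊤) :
    Integrable fun x => φ' x ^ 2 + cos (φ x) ^ 2 := by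
  have hmeas : Measurable fun x => φ' x ^ 2 + cos (φ x) ^ 2 :=
    ((measurable_of_hasDerivAt hφ).pow_const 2).add
      ((continuous_cos.comp (continuous_of_hasDerivAt hφ)).measurable.pow_const 2)
  refine ⟨hmeas.aestronglyMeasurable, ?_⟩
  rw [hasFiniteIntegral_iff_ofReal (Eventually.of_forall fun x => by positivity)]
  exact (lintegral_mono fun x => ENNReal.ofReal_le_ofReal
    (sq_add_cos_sq_le_energyDensity x)).trans_lt hfin.lt_top

variable (htop : Tendsto φ atTop (𝓝 (π / 2))) (hbot : Tendsto φ atBot (𝓝 (-(π / 2))))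
include htop hbot

lemma lintegral_energyDensity (hU : MeasurableSet U)
    (hint : Integrable fun x => φ' x ^ 2 + cos (φ x) ^ 2) :
    ∫⁻ x, ENNReal.ofReal (energyDensity U φ φ' x) = ENNReal.ofReal
      (4 + (∫ x, (φ' x - cos (φ x)) ^ 2) + ∫ x in U, (φ' x ^ 2 + cos (φ x) ^ 2)) := by
  have hdens : energyDensity U φ φ' = fun x =>
      φ' x ^ 2 + cos (φ x) ^ 2 + U.indicator (fun y => φ' y ^ 2 + cos (φ y) ^ 2) x :=
    funext energyDensity_eq
  have hint' : Integrable (energyDensity U φ φ') := hdens ▸ hint.add (hint.indicator hU)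
  rw [← ofReal_integral_eq_lintegral_ofReal hint' (Eventually.of_forall energyDensity_nonneg),
    hdens, integral_add hint (hint.indicator hU), integral_indicator hU,
    integral_sq_add_cos_sq hφ htop hbot hint]

lemma four_le_lintegral_energyDensity (hU : MeasurableSet U) :
    4 ≤ ∫⁻ x, ENNReal.ofReal (energyDensity U φ φ' x) := by
  by_cases hfin : ∫⁻ x, ENNReal.ofReal (energyDensity U φ φ' x) = ⊤
  · simp [hfin]
  rw [lintegral_energyDensity hφ htop hbot hU
    (integrable_sq_add_cos_sq_of_lintegral_ne_top hφ hfin)]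
  refine ENNReal.ofNat_le_ofReal.2 ?_
  have hdefect : 0 ≤ ∫ x, (φ' x - cos (φ x)) ^ 2 := integral_nonneg fun x => sq_nonneg _
  have hexcess : 0 ≤ ∫ x in U, (φ' x ^ 2 + cos (φ x) ^ 2) :=
    setIntegral_nonneg hU fun x _ => by positivity
  linarith

lemma lintegral_energyDensity_ne_four (hU : IsOpen U) (hU_ne : U.Nonempty) :
    ∫⁻ x, ENNReal.ofReal (energyDensity U φ φ' x) ≠ 4 := by
  intro h4
  have hint := integrable_sq_add_cos_sq_of_lintegral_ne_top hφ (h4 ▸ ENNReal.ofNat_ne_top)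
  have hdefect : 0 ≤ ∫ x, (φ' x - cos (φ x)) ^ 2 := integral_nonneg fun x => sq_nonneg _
  have hexcess : 0 ≤ ∫ x in U, (φ' x ^ 2 + cos (φ x) ^ 2) :=
    setIntegral_nonneg hU.measurableSet fun x _ => by positivity
  rw [lintegral_energyDensity hφ htop hbot hU.measurableSet hint, ENNReal.ofReal_eq_ofNat] at h4
  have hae : φ' =ᵐ[volume] fun x => cos (φ x) := by
    have hzero : ∫ x, (φ' x - cos (φ x)) ^ 2 = 0 := by linarith
    filter_upwards [(integral_eq_zero_iff_of_nonneg (fun _ => sq_nonneg _)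
      (integrable_deriv_sub_cos_sq hφ hint)).1 hzero] with x hx
    exact sub_eq_zero.1 (pow_eq_zero_iff two_ne_zero |>.1 hx)
  have hcos_ae : (fun x => cos (φ x) ^ 2) =ᵐ[volume.restrict U] 0 := by
    have hzero : ∫ x in U, (φ' x ^ 2 + cos (φ x) ^ 2) = 0 := by linarith
    filter_upwards [(setIntegral_eq_zero_iff_of_nonneg_ae
      (Eventually.of_forall fun x => by positivity) hint.integrableOn).1 hzero] with x hx
    simp only [Pi.zero_apply] at hx ⊢
    nlinarith [sq_nonneg (φ' x), sq_nonneg (cos (φ x))]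
  obtain ⟨x₀, hx₀⟩ := hU_ne
  refine cos_ne_zero_of_deriv_ae_eq_cos hφ htop hbot hae x₀ ?_
  exact pow_eq_zero_iff two_ne_zero |>.1 <| Measure.eqOn_open_of_ae_eq hcos_ae hU
    ((continuous_cos.comp (continuous_of_hasDerivAt hφ)).pow 2).continuousOn continuousOn_const hx₀

end Energy

section SelfDual

variable {φ : ℝ → ℝ} (hφ : ∀ x, HasDerivAt φ (cos (φ x)) x)
include hφ

lemma integrable_cos_sq_of_hasDerivAt_cos : Integrable fun x => cos (φ x) ^ 2 :=
  integrable_of_hasDerivAt_of_nonneg_of_abs_le (C := 1)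
    (fun x => ((hφ x).sin).congr_deriv (sq _).symm)
    ((continuous_cos.comp (continuous_of_hasDerivAt hφ)).pow 2) (fun _ => sq_nonneg _)
    (fun _ => abs_sin_le_one _)

lemma lintegral_energyDensity_of_hasDerivAt_cos (htop : Tendsto φ atTop (𝓝 (π / 2)))
    (hbot : Tendsto φ atBot (𝓝 (-(π / 2)))) {a b : ℝ} (hab : a ≤ b) :
    ∫⁻ x, ENNReal.ofReal (energyDensity (Ioo a b) φ (fun x => cos (φ x)) x) =
      ENNReal.ofReal (4 + 2 * (sin (φ b) - sin (φ a))) := by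
  have hcont : Continuous φ := continuous_of_hasDerivAt hφ
  have hsq := integrable_cos_sq_of_hasDerivAt_cos hφ
  have hftc : ∫ x in a..b, cos (φ x) * cos (φ x) = sin (φ b) - sin (φ a) :=
    intervalIntegral.integral_eq_sub_of_hasDerivAt (fun x _ => (hφ x).sin)
      (Continuous.intervalIntegrable (by fun_prop) _ _)
  rw [lintegral_energyDensity hφ htop hbot measurableSet_Ioo (hsq.add hsq), ← hftc,
    ← integral_Ioc_eq_integral_Ioo, ← intervalIntegral.integral_of_le hab,
    ← intervalIntegral.integral_const_mul]
  simp only [sub_self, zero_pow two_ne_zero, integral_zero, add_zero]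
  congr 3 with x
  ring

end SelfDual

noncomputable def gudermannian (x : ℝ) : ℝ := arctan (sinh x)

lemma cos_gudermannian (x : ℝ) : cos (gudermannian x) = (cosh x)⁻¹ := by
  rw [gudermannian, cos_arctan, add_comm, ← cosh_sq, sqrt_sq (cosh_pos x).le, one_div]

lemma hasDerivAt_gudermannian (x : ℝ) : HasDerivAt gudermannian (cos (gudermannian x)) x := by
  refine ((hasDerivAt_arctan (sinh x)).comp x (hasDerivAt_sinh x)).congr_deriv ?_
  rw [cos_gudermannian, add_comm, ← cosh_sq]
  field_simp [(cosh_pos x).ne']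

lemma tendsto_gudermannian_atTop : Tendsto gudermannian atTop (𝓝 (π / 2)) :=
  (tendsto_arctan_atTop.mono_right nhdsWithin_le_nhds).comp sinhOrderIso.tendsto_atTop

lemma tendsto_gudermannian_atBot : Tendsto gudermannian atBot (𝓝 (-(π / 2))) :=
  (tendsto_arctan_atBot.mono_right nhdsWithin_le_nhds).comp sinhOrderIso.tendsto_atBot

/-- For the step weight `a = 2` on `(−1,1)`, `a = 1` elsewhere, the infimum of the
weighted pendulum energy over `Ḣ¹` profiles connecting `−π/2` to `π/2` equals `4`
and is not attained. -/
theorem statement6 :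
    sInf {E : ENNReal | ∃ φ φ' : ℝ → ℝ,
        (∀ x, HasDerivAt φ (φ' x) x) ∧
        Integrable (fun x => (φ' x) ^ 2) ∧
        Tendsto φ atTop (nhds (π / 2)) ∧
        Tendsto φ atBot (nhds (-(π / 2))) ∧
        E = ∫⁻ x, ENNReal.ofReal
          ((if x ∈ Set.Ioo (-1 : ℝ) 1 then (2 : ℝ) else 1) * (φ' x) ^ 2
            + (if x ∈ Set.Ioo (-1 : ℝ) 1 then (2 : ℝ) else 1) * Real.cos (φ x) ^ 2)} = 4 ∧
    (4 : ENNReal) ∉ {E : ENNReal | ∃ φ φ' : ℝ → ℝ,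
        (∀ x, HasDerivAt φ (φ' x) x) ∧
        Integrable (fun x => (φ' x) ^ 2) ∧
        Tendsto φ atTop (nhds (π / 2)) ∧
        Tendsto φ atBot (nhds (-(π / 2))) ∧
        E = ∫⁻ x, ENNReal.ofReal
          ((if x ∈ Set.Ioo (-1 : ℝ) 1 then (2 : ℝ) else 1) * (φ' x) ^ 2
            + (if x ∈ Set.Ioo (-1 : ℝ) 1 then (2 : ℝ) else 1) * Real.cos (φ x) ^ 2)} := by
  refine ⟨le_antisymm ?_ (le_sInf ?_), ?_⟩
  · have hsin : Tendsto (fun x => sin (gudermannian x)) atBot (𝓝 (-1)) := by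
      simpa [Function.comp_def] using (continuous_sin.tendsto _).comp tendsto_gudermannian_atBot
    have hlim : Tendsto (fun t => ENNReal.ofReal
        (4 + 2 * (sin (gudermannian (t + 1)) - sin (gudermannian (t + -1))))) atBot (𝓝 4) := by
      have h := (hsin.comp (tendsto_atBot_add_const_right _ 1 tendsto_id)).sub
        (hsin.comp (tendsto_atBot_add_const_right _ (-1) tendsto_id))
      simpa using ENNReal.tendsto_ofReal ((h.const_mul 2).const_add 4)
    refine ge_of_tendsto' hlim fun t => ?_
    have hφ : ∀ x, HasDerivAt (fun x => gudermannian (t + x)) (cos (gudermannian (t + x))) x :=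
      fun x => (hasDerivAt_gudermannian (t + x)).comp_const_add t x
    have htop := tendsto_gudermannian_atTop.comp (tendsto_atTop_add_const_left _ t tendsto_id)
    have hbot := tendsto_gudermannian_atBot.comp (tendsto_atBot_add_const_left _ t tendsto_id)
    refine le_of_le_of_eq (sInf_le ⟨_, _, hφ, integrable_cos_sq_of_hasDerivAt_cos hφ, htop, hbot,
      rfl⟩) (lintegral_energyDensity_of_hasDerivAt_cos hφ htop hbot (by norm_num))
  · rintro E ⟨φ, φ', hφ, -, htop, hbot, rfl⟩
    exact four_le_lintegral_energyDensity hφ htop hbot measurableSet_Ioo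
  · rintro ⟨φ, φ', hφ, -, htop, hbot, h4⟩
    exact lintegral_energyDensity_ne_four hφ htop hbot isOpen_Ioo ⟨0, by norm_num⟩ h4.symm
end

section
/- For the family of profiles φ̂_{x₀}(x) = π/2 − 2 arctan(e^{−x+x₀}) and the weight a = 2 on (−1,1), a = 1 elsewhere, the energy satisfies G(φ̂_{x₀}) = 4 + 2(sin φ̂_{x₀}(1) − sin φ̂_{x₀}(−1)), and this quantity tends to 4 as x₀ → +∞ while being strictly greater than 4 for every x₀ ∈ ℝ. -/
open Real MeasureTheory Filter Set Topology

/-! The profile solves `φ' = cos φ`, so `(φ')² = cos² φ` and the integrand is `2 a cos² φ`,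
where `cos² φ` is the derivative of `sin φ`. Since `sin φ` increases from `-1` to `1`, the
weight `1` everywhere contributes `2 · 2 = 4`, and the extra weight on `(-1, 1)` contributes
`2 (sin φ(1) - sin φ(-1)) > 0`. Translating the kink to `+∞` makes both `sin φ(±1)` tend
to `-1`. -/

theorem integrable_deriv_of_nonneg {f f' : ℝ → ℝ} {m M : ℝ}
    (hderiv : ∀ x, HasDerivAt f (f' x) x) (hnonneg : ∀ x, 0 ≤ f' x)
    (hm : ∀ x, m ≤ f x) (hM : ∀ x, f x ≤ M) : Integrable f' := by
  have hcont : Continuous f := continuous_iff_continuousAt.2 fun x => (hderiv x).continuousAt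
  refine integrable_of_intervalIntegral_norm_bounded (M - m)
    (fun i => intervalIntegral.integrableOn_deriv_of_nonneg hcont.continuousOn
      (fun x _ => hderiv x) fun x _ => hnonneg x)
    (tendsto_neg_atTop_atBot : Tendsto (fun x : ℝ => -x) atTop atBot) tendsto_id ?_
  filter_upwards with i
  have hint : IntervalIntegrable f' volume (-i) (id i) :=
    intervalIntegral.intervalIntegrable_deriv_of_nonneg hcont.continuousOn
      (fun x _ => hderiv x) fun x _ => hnonneg x
  calc ∫ x in -i..id i, ‖f' x‖ = ∫ x in -i..id i, f' x :=
        intervalIntegral.integral_congr fun x _ => norm_of_nonneg (hnonneg x)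
    _ = f (id i) - f (-i) :=
        intervalIntegral.integral_eq_sub_of_hasDerivAt (fun x _ => hderiv x) hint
    _ ≤ M - m := sub_le_sub (hM _) (hm _)

theorem integral_ite_mul {α : Type*} [MeasurableSpace α] {μ : Measure α} {s : Set α}
    [DecidablePred (· ∈ s)] (hs : MeasurableSet s) {f : α → ℝ} (hf : Integrable f μ)
    (c : ℝ) :
    ∫ x, (if x ∈ s then c else 1) * f x ∂μ
      = ∫ x, f x ∂μ + (c - 1) * ∫ x in s, f x ∂μ := by
  have hsplit : (fun x => (if x ∈ s then c else 1) * f x)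
      = fun x => f x + s.indicator (fun x => (c - 1) * f x) x := by
    funext x
    by_cases hx : x ∈ s <;> simp only [hx, if_true, if_false, indicator_of_mem,
      indicator_of_notMem, not_false_eq_true] <;> ring
  rw [hsplit, integral_add hf ((hf.const_mul _).indicator hs), integral_indicator hs,
    integral_const_mul]

theorem cos_pi_div_two_sub_two_mul_arctan (u : ℝ) :
    cos (π / 2 - 2 * arctan u) = 2 * u / (1 + u ^ 2) := by
  have hs : √(1 + u ^ 2) ^ 2 = 1 + u ^ 2 := sq_sqrt (by positivity)
  have hs₀ : √(1 + u ^ 2) ≠ 0 := by positivity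
  rw [cos_pi_div_two_sub, sin_two_mul, sin_arctan, cos_arctan]
  field_simp
  rw [hs]

theorem tendsto_sin_pi_div_two_sub_two_mul_arctan_exp_atBot :
    Tendsto (fun s => sin (π / 2 - 2 * arctan (exp s))) atBot (𝓝 1) := by
  have h : Tendsto (fun s => arctan (exp s)) atBot (𝓝 0) := by
    simpa [Function.comp_def] using (continuous_arctan.tendsto 0).comp tendsto_exp_atBot
  have hcont : Continuous fun t : ℝ => sin (π / 2 - 2 * t) := by fun_prop
  simpa [Function.comp_def] using (hcont.tendsto 0).comp h

theorem tendsto_sin_pi_div_two_sub_two_mul_arctan_exp_atTop :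
    Tendsto (fun s => sin (π / 2 - 2 * arctan (exp s))) atTop (𝓝 (-1)) := by
  have h : Tendsto (fun s => arctan (exp s)) atTop (𝓝 (π / 2)) :=
    (tendsto_arctan_atTop.mono_right nhdsWithin_le_nhds).comp tendsto_exp_atTop
  have hcont : Continuous fun t : ℝ => sin (π / 2 - 2 * t) := by fun_prop
  have hlim := (hcont.tendsto (π / 2)).comp h
  rwa [Function.comp_def,
    show π / 2 - 2 * (π / 2) = -(π / 2) by ring, sin_neg, sin_pi_div_two] at hlim

/-- The profile `φ̂_{x₀}`. -/
noncomputable def kink (x₀ x : ℝ) : ℝ := π / 2 - 2 * arctan (exp (-x + x₀))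

theorem kink_one (x₀ : ℝ) : kink x₀ 1 = π / 2 - 2 * arctan (exp (-1 + x₀)) := rfl

theorem kink_neg_one (x₀ : ℝ) : kink x₀ (-1) = π / 2 - 2 * arctan (exp (1 + x₀)) := by
  rw [kink, neg_neg]

section Kink

variable (x₀ : ℝ)

theorem hasDerivAt_kink (x : ℝ) : HasDerivAt (kink x₀) (cos (kink x₀ x)) x := by
  have hexp : HasDerivAt (fun y => exp (-y + x₀)) (exp (-x + x₀) * -1) x :=
    ((hasDerivAt_neg x).add_const x₀).exp
  refine ((hexp.arctan.const_mul 2).const_sub (π / 2)).congr_deriv ?_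
  rw [kink, cos_pi_div_two_sub_two_mul_arctan]
  ring

theorem cos_kink_pos (x : ℝ) : 0 < cos (kink x₀ x) := by
  rw [kink, cos_pi_div_two_sub_two_mul_arctan]
  positivity

theorem hasDerivAt_sin_kink (x : ℝ) :
    HasDerivAt (fun y => sin (kink x₀ y)) (cos (kink x₀ x) ^ 2) x := by
  simpa only [sq] using (hasDerivAt_kink x₀ x).sin

theorem strictMono_sin_kink : StrictMono fun x => sin (kink x₀ x) :=
  strictMono_of_hasDerivAt_pos (hasDerivAt_sin_kink x₀) fun x => pow_pos (cos_kink_pos x₀ x) 2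

theorem tendsto_sin_kink_atTop : Tendsto (fun x => sin (kink x₀ x)) atTop (𝓝 1) :=
  tendsto_sin_pi_div_two_sub_two_mul_arctan_exp_atBot.comp
    (tendsto_atBot_add_const_right _ x₀ tendsto_neg_atTop_atBot)

theorem tendsto_sin_kink_atBot : Tendsto (fun x => sin (kink x₀ x)) atBot (𝓝 (-1)) :=
  tendsto_sin_pi_div_two_sub_two_mul_arctan_exp_atTop.comp
    (tendsto_atTop_add_const_right _ x₀ tendsto_neg_atBot_atTop)

theorem tendsto_sin_kink_center_atTop (x : ℝ) :
    Tendsto (fun x₀ => sin (kink x₀ x)) atTop (𝓝 (-1)) :=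
  tendsto_sin_pi_div_two_sub_two_mul_arctan_exp_atTop.comp
    (tendsto_atTop_add_const_left _ (-x) tendsto_id)

theorem integrable_cos_sq_kink : Integrable fun x => cos (kink x₀ x) ^ 2 :=
  integrable_deriv_of_nonneg (hasDerivAt_sin_kink x₀) (fun _ => sq_nonneg _)
    (fun _ => neg_one_le_sin _) fun _ => sin_le_one _

theorem integral_cos_sq_kink : ∫ x, cos (kink x₀ x) ^ 2 = 2 := by
  rw [integral_of_hasDerivAt_of_tendsto (hasDerivAt_sin_kink x₀) (integrable_cos_sq_kink x₀)
    (tendsto_sin_kink_atBot x₀) (tendsto_sin_kink_atTop x₀)]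
  norm_num

theorem integral_Ioo_cos_sq_kink {a b : ℝ} (hab : a ≤ b) :
    ∫ x in Ioo a b, cos (kink x₀ x) ^ 2 = sin (kink x₀ b) - sin (kink x₀ a) := by
  rw [← integral_Ioc_eq_integral_Ioo, ← intervalIntegral.integral_of_le hab]
  exact intervalIntegral.integral_eq_sub_of_hasDerivAt (fun x _ => hasDerivAt_sin_kink x₀ x)
    (integrable_cos_sq_kink x₀).intervalIntegrable

theorem integral_kink_energy :
    ∫ x, ((if x ∈ Ioo (-1 : ℝ) 1 then (2 : ℝ) else 1) * deriv (kink x₀) x ^ 2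
        + (if x ∈ Ioo (-1 : ℝ) 1 then (2 : ℝ) else 1) * cos (kink x₀ x) ^ 2)
      = 4 + 2 * (sin (kink x₀ 1) - sin (kink x₀ (-1))) := by
  have hderiv : deriv (kink x₀) = fun x => cos (kink x₀ x) :=
    funext fun x => (hasDerivAt_kink x₀ x).deriv
  calc _ = ∫ x, (if x ∈ Ioo (-1 : ℝ) 1 then (2 : ℝ) else 1)
          * (2 * cos (kink x₀ x) ^ 2) := by
        simp only [hderiv]
        congr 1 with x
        ring
    _ = 4 + 2 * (sin (kink x₀ 1) - sin (kink x₀ (-1))) := by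
      rw [integral_ite_mul measurableSet_Ioo ((integrable_cos_sq_kink x₀).const_mul 2),
        integral_const_mul, integral_const_mul, integral_cos_sq_kink,
        integral_Ioo_cos_sq_kink x₀ (by norm_num)]
      ring

end Kink

/-- For the profiles `φ̂_{x₀}(x) = π/2 − 2 arctan(e^{−x+x₀})` and the step weight
`a = 2` on `(−1,1)`, `a = 1` elsewhere:
`G(φ̂_{x₀}) = 4 + 2(sin φ̂_{x₀}(1) − sin φ̂_{x₀}(−1))`, this is `> 4` for every `x₀`,
and it tends to `4` as `x₀ → +∞`. -/
theorem statement7 :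
    (∀ x₀ : ℝ,
      (∫ x, ((if x ∈ Set.Ioo (-1 : ℝ) 1 then (2 : ℝ) else 1) *
            (deriv (fun y => π / 2 - 2 * Real.arctan (Real.exp (-y + x₀))) x) ^ 2
          + (if x ∈ Set.Ioo (-1 : ℝ) 1 then (2 : ℝ) else 1) *
            Real.cos (π / 2 - 2 * Real.arctan (Real.exp (-x + x₀))) ^ 2))
        = 4 + 2 * (Real.sin (π / 2 - 2 * Real.arctan (Real.exp (-1 + x₀)))
            - Real.sin (π / 2 - 2 * Real.arctan (Real.exp (1 + x₀)))) ∧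
      (4 : ℝ) < 4 + 2 * (Real.sin (π / 2 - 2 * Real.arctan (Real.exp (-1 + x₀)))
            - Real.sin (π / 2 - 2 * Real.arctan (Real.exp (1 + x₀))))) ∧
    Tendsto (fun x₀ : ℝ =>
        4 + 2 * (Real.sin (π / 2 - 2 * Real.arctan (Real.exp (-1 + x₀)))
          - Real.sin (π / 2 - 2 * Real.arctan (Real.exp (1 + x₀)))))
      atTop (nhds 4) := by
  simp only [← kink_one, ← kink_neg_one]
  refine ⟨fun x₀ => ⟨integral_kink_energy x₀, ?_⟩, ?_⟩
  · linarith [strictMono_sin_kink x₀ (show (-1 : ℝ) < 1 by norm_num)]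
  · simpa using (((tendsto_sin_kink_center_atTop 1).sub
      (tendsto_sin_kink_center_atTop (-1))).const_mul 2).const_add 4
end

section
/- Let m = (m₁, m₂, m₃) : ℝ → S² be measurable with ∂ₓm ∈ L²(ℝ) and m₂² + m₃² ∈ L¹ with respect to the weight a (A₀ ≥ a ≥ a₀ > 0). Define m̃ = (m₁, √(m₂² + m₃²), 0). Then m̃ takes values in S¹ × {0}, and F(m) ≥ F(m̃), where F(m) = ∫_ℝ (a(x)|∂ₓm|² + a(x)(m₂² + m₃²)) dx. Moreover equality F(m) = F(m̃) together with m₂² + m₃² > 0 everywhere implies that (m₂, m₃)/√(m₂² + m₃²) is constant. -/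
open Real MeasureTheory Filter Set Topology

/-- Everywhere-differentiable function with a.e. zero derivative is constant. -/
lemma aux_deriv_ae_zero_const (f f' : ℝ → ℝ) (hd : ∀ x, HasDerivAt f (f' x) x)
    (h0 : ∀ᵐ x, f' x = 0) (x : ℝ) : f x = f 0 := by
  have hii : IntervalIntegrable f' volume 0 x := by
    constructor <;>
      exact (integrable_zero _ _ _).congr
        (ae_restrict_of_ae (h0.mono fun y hy => hy.symm))
  have h1 := intervalIntegral.integral_eq_sub_of_hasDerivAt
    (f := f) (f' := f') (a := 0) (b := x) (fun y _ => hd y) hii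
  have hz : (∫ y in (0:ℝ)..x, f' y) = 0 := by
    rw [intervalIntegral.integral_congr_ae
      (g := fun _ => (0:ℝ)) (h0.mono fun y hy _ => hy)]
    simp
  rw [hz] at h1
  linarith

/-- Weak-derivative identity for `√(m₂² + m₃²)`. -/
lemma aux_weak_deriv (m₂ m₃ m₂' m₃' : ℝ → ℝ)
    (hd2 : ∀ x, HasDerivAt m₂ (m₂' x) x) (hd3 : ∀ x, HasDerivAt m₃ (m₃' x) x)
    (hb : ∀ x, (m₂ x) ^ 2 + (m₃ x) ^ 2 ≤ 1)
    (hm2' : Measurable m₂') (hm3' : Measurable m₃')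
    (hL2 : Integrable (fun x => (m₂' x) ^ 2 + (m₃' x) ^ 2))
    (η η' : ℝ → ℝ) (hη : Continuous η) (hη' : Continuous η')
    (hηc : HasCompactSupport η)
    (hdη : ∀ x, HasDerivAt η (η' x) x) :
    (∫ x, Real.sqrt ((m₂ x) ^ 2 + (m₃ x) ^ 2) * η' x)
      = -∫ x, (if (m₂ x) ^ 2 + (m₃ x) ^ 2 = 0 then 0
          else (m₂ x * m₂' x + m₃ x * m₃' x) / Real.sqrt ((m₂ x) ^ 2 + (m₃ x) ^ 2)) * η x := by
  set g : ℝ → ℝ := fun x => (m₂ x) ^ 2 + (m₃ x) ^ 2 with hgdef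
  set num : ℝ → ℝ := fun x => m₂ x * m₂' x + m₃ x * m₃' x with hnumdef
  set G : ℝ → ℝ := fun x => (m₂' x) ^ 2 + (m₃' x) ^ 2 with hGdef
  have hg0 : ∀ x, 0 ≤ g x := fun x => by positivity
  have hG0 : ∀ x, 0 ≤ G x := fun x => by positivity
  have hc2 : Continuous m₂ := by
    rw [continuous_iff_continuousAt]; exact fun x => (hd2 x).continuousAt
  have hc3 : Continuous m₃ := by
    rw [continuous_iff_continuousAt]; exact fun x => (hd3 x).continuousAt
  have hgc : Continuous g := by fun_prop
  have hnum_meas : Measurable num :=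
    (hc2.measurable.mul hm2').add (hc3.measurable.mul hm3')
  -- support of η' inside tsupport η
  have hη'supp : ∀ x, x ∉ tsupport η → η' x = 0 := by
    intro x hx
    have hev : η =ᶠ[𝓝 x] (fun _ => (0:ℝ)) := by
      have : (tsupport η)ᶜ ∈ 𝓝 x :=
        (isClosed_tsupport η).isOpen_compl.mem_nhds hx
      filter_upwards [this] with y hy
      exact image_eq_zero_of_notMem_tsupport hy
    have h1 : HasDerivAt η (0:ℝ) x := (hasDerivAt_const x (0:ℝ)).congr_of_eventuallyEq hev
    exact (hdη x).unique h1
  have hη'c : HasCompactSupport η' :=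
    HasCompactSupport.intro hηc fun x hx => hη'supp x hx
  obtain ⟨R, hRsub⟩ : ∃ R : ℝ, tsupport η ⊆ Ioo (-R) R := by
    obtain ⟨R, hR⟩ := hηc.isBounded.subset_ball 0
    exact ⟨R, fun x hx => by simpa [Real.ball_eq_Ioo] using hR hx⟩
  have hsuppη : Function.support η ⊆ Ioc (-R) R :=
    fun x hx => Ioo_subset_Ioc_self (hRsub (subset_tsupport η hx))
  have hηR : η R = 0 := by
    apply image_eq_zero_of_notMem_tsupport
    intro h; exact absurd (hRsub h).2 (lt_irrefl R)
  have hηmR : η (-R) = 0 := by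
    apply image_eq_zero_of_notMem_tsupport
    intro h; exact absurd (hRsub h).1 (lt_irrefl (-R))
  -- Cauchy-Schwarz bound
  have hCS : ∀ x, |num x| ≤ Real.sqrt (g x) * Real.sqrt (G x) := by
    intro x
    rw [← Real.sqrt_mul (hg0 x), ← Real.sqrt_sq_eq_abs]
    apply Real.sqrt_le_sqrt
    simp only [hgdef, hnumdef, hGdef]
    nlinarith [sq_nonneg (m₂ x * m₃' x - m₃ x * m₂' x)]
  have hGle : ∀ x, Real.sqrt (G x) ≤ 1 + G x := by
    intro x
    have h1 : Real.sqrt (G x) ^ 2 = G x := Real.sq_sqrt (hG0 x)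
    nlinarith [Real.sqrt_nonneg (G x)]
  -- the approximating family
  set ε : ℕ → ℝ := fun n => ((n : ℝ) + 1)⁻¹ with hεdef
  have hεpos : ∀ n, 0 < ε n := fun n => by positivity
  have hεle1 : ∀ n, ε n ≤ 1 := fun n => by
    rw [hεdef]
    rw [inv_le_one_iff₀]
    right; linarith [Nat.cast_nonneg (α := ℝ) n]
  set rε : ℕ → ℝ → ℝ := fun n x => Real.sqrt (g x + (ε n) ^ 2) with hrεdef
  set sε : ℕ → ℝ → ℝ := fun n x => num x / rε n x with hsεdef
  have hrεpos : ∀ n x, 0 < rε n x := fun n x =>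
    Real.sqrt_pos.mpr (by have := hg0 x; have := hεpos n; positivity)
  have hrεle : ∀ n x, rε n x ≤ Real.sqrt 2 := by
    intro n x
    apply Real.sqrt_le_sqrt
    have h1 := hb x
    have h2 : (ε n) ^ 2 ≤ 1 := by
      have := hεpos n
      nlinarith [hεle1 n]
    simpa [hgdef] using by linarith
  have hrεc : ∀ n, Continuous (rε n) := fun n =>
    Real.continuous_sqrt.comp (hgc.add continuous_const)
  have hsε_meas : ∀ n, Measurable (sε n) := fun n =>
    hnum_meas.div (hrεc n).measurable
  have hsqrtg_le_rε : ∀ n x, Real.sqrt (g x) ≤ rε n x := by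
    intro n x
    apply Real.sqrt_le_sqrt
    nlinarith [hεpos n]
  have hsε_bd : ∀ n x, |sε n x| ≤ Real.sqrt (G x) := by
    intro n x
    rw [hsεdef, abs_div, abs_of_pos (hrεpos n x)]
    rw [div_le_iff₀ (hrεpos n x)]
    calc |num x| ≤ Real.sqrt (g x) * Real.sqrt (G x) := hCS x
      _ ≤ rε n x * Real.sqrt (G x) := by
          apply mul_le_mul_of_nonneg_right (hsqrtg_le_rε n x) (Real.sqrt_nonneg _)
      _ = Real.sqrt (G x) * rε n x := by ring
  -- derivative of rε
  have hdrε : ∀ n x, HasDerivAt (rε n) (sε n x) x := by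
    intro n x
    have hgd : HasDerivAt (fun y => g y + (ε n) ^ 2)
        (2 * m₂ x * m₂' x + 2 * m₃ x * m₃' x) x := by
      have h2 := ((hd2 x).pow 2).add ((hd3 x).pow 2)
      have : HasDerivAt (fun y => g y + (ε n) ^ 2) _ x := h2.add_const ((ε n) ^ 2)
      convert this using 1
      ring
    have hne : g x + (ε n) ^ 2 ≠ 0 := by
      have := hg0 x; have := hεpos n; positivity
    have := hgd.sqrt hne
    convert this using 1
    rw [hsεdef, hrεdef]
    have hpos : (0:ℝ) < Real.sqrt (g x + ε n ^ 2) := hrεpos n x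
    field_simp
    ring
  -- integrable bound for sε * η
  obtain ⟨Cη, hCη⟩ := hη.bounded_above_of_compact_support hηc
  have hbound1 : Integrable (fun x => ‖η x‖ + ‖η x‖ * G x) := by
    have h1 : Integrable η := hη.integrable_of_hasCompactSupport hηc
    have h2 : Integrable (fun x => ‖η x‖ * G x) :=
      hL2.bdd_mul (hη.norm.aestronglyMeasurable) (c := Cη) (ae_of_all _ fun x => by
        simpa using hCη x)
    exact h1.norm.add h2
  have hptbd : ∀ n x, ‖sε n x * η x‖ ≤ ‖η x‖ + ‖η x‖ * G x := by
    intro n x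
    rw [norm_mul]
    calc ‖sε n x‖ * ‖η x‖ ≤ Real.sqrt (G x) * ‖η x‖ := by
          apply mul_le_mul_of_nonneg_right _ (norm_nonneg _)
          simpa [Real.norm_eq_abs] using hsε_bd n x
      _ ≤ (1 + G x) * ‖η x‖ := by
          apply mul_le_mul_of_nonneg_right (hGle x) (norm_nonneg _)
      _ = ‖η x‖ + ‖η x‖ * G x := by ring
  have hI1 : ∀ n, Integrable (fun x => sε n x * η x) := by
    intro n
    apply hbound1.mono' (((hsε_meas n).aestronglyMeasurable).mul hη.aestronglyMeasurable)
    exact ae_of_all _ fun x => hptbd n x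
  have hI2 : ∀ n, Integrable (fun x => rε n x * η' x) := by
    intro n
    exact ((hrεc n).mul hη').integrable_of_hasCompactSupport hη'c.mul_left
  -- integration by parts for each n
  have hkey : ∀ n, (∫ x, sε n x * η x) + (∫ x, rε n x * η' x) = 0 := by
    intro n
    have hder : ∀ x ∈ uIcc (-R) R, HasDerivAt (fun y => rε n y * η y)
        (sε n x * η x + rε n x * η' x) x := fun x _ => (hdrε n x).mul (hdη x)
    have hint : IntervalIntegrable (fun x => sε n x * η x + rε n x * η' x)
        volume (-R) R := ((hI1 n).add (hI2 n)).intervalIntegrable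
    have h1 := intervalIntegral.integral_eq_sub_of_hasDerivAt hder hint
    rw [hηR, hηmR, mul_zero, mul_zero, sub_zero] at h1
    rw [intervalIntegral.integral_add (hI1 n).intervalIntegrable
      (hI2 n).intervalIntegrable] at h1
    rw [intervalIntegral.integral_eq_integral_of_support_subset
        (f := fun x => sε n x * η x) (fun x hx => hsuppη (fun h => hx (by simp [h]))),
      intervalIntegral.integral_eq_integral_of_support_subset
        (f := fun x => rε n x * η' x) ?_] at h1
    · exact h1
    · intro x hx
      have : η' x ≠ 0 := fun h => hx (by simp [h])
      have hmem : x ∈ tsupport η := by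
        by_contra hmem
        exact this (hη'supp x hmem)
      exact Ioo_subset_Ioc_self (hRsub hmem)
  -- limits
  have hεlim : Tendsto ε atTop (𝓝 0) := by
    rw [hεdef]
    simpa [one_div] using tendsto_one_div_add_atTop_nhds_zero_nat (𝕜 := ℝ)
  have hrεlim : ∀ x, Tendsto (fun n => rε n x) atTop (𝓝 (Real.sqrt (g x))) := by
    intro x
    have h2 : Tendsto (fun n => (ε n) ^ 2) atTop (𝓝 0) := by
      simpa using hεlim.pow 2
    have h1 : Tendsto (fun n => g x + (ε n) ^ 2) atTop (𝓝 (g x)) := by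
      simpa using tendsto_const_nhds.add h2
    exact (Real.continuous_sqrt.tendsto _).comp h1
  have hDCT2 : Tendsto (fun n => ∫ x, rε n x * η' x) atTop
      (𝓝 (∫ x, Real.sqrt (g x) * η' x)) := by
    apply tendsto_integral_of_dominated_convergence (fun x => Real.sqrt 2 * ‖η' x‖)
    · exact fun n => (((hrεc n).mul hη')).aestronglyMeasurable
    · exact ((hη'.integrable_of_hasCompactSupport hη'c).norm).const_mul _
    · intro n
      apply ae_of_all
      intro x
      rw [norm_mul]
      apply mul_le_mul_of_nonneg_right _ (norm_nonneg _)
      rw [Real.norm_eq_abs, abs_of_pos (hrεpos n x)]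
      exact hrεle n x
    · exact ae_of_all _ fun x => (hrεlim x).mul_const (η' x)
  set N : ℝ → ℝ := fun x => if g x = 0 then 0 else num x / Real.sqrt (g x) with hNdef
  have hDCT1 : Tendsto (fun n => ∫ x, sε n x * η x) atTop
      (𝓝 (∫ x, N x * η x)) := by
    apply tendsto_integral_of_dominated_convergence (fun x => ‖η x‖ + ‖η x‖ * G x)
    · exact fun n => ((hsε_meas n).aestronglyMeasurable).mul hη.aestronglyMeasurable
    · exact hbound1
    · exact fun n => ae_of_all _ fun x => hptbd n x
    · apply ae_of_all
      intro x
      by_cases hx : g x = 0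
      · have hx' : (m₂ x) ^ 2 + (m₃ x) ^ 2 = 0 := hx
        have h2 : m₂ x = 0 := by
          have h : (m₂ x) ^ 2 = 0 := by nlinarith [sq_nonneg (m₂ x), sq_nonneg (m₃ x)]
          exact pow_eq_zero_iff two_ne_zero |>.mp h
        have h3 : m₃ x = 0 := by
          have h : (m₃ x) ^ 2 = 0 := by nlinarith [sq_nonneg (m₂ x), sq_nonneg (m₃ x)]
          exact pow_eq_zero_iff two_ne_zero |>.mp h
        have hnum0 : num x = 0 := by simp [hnumdef, h2, h3]
        have : ∀ n, sε n x * η x = 0 := fun n => by simp [hsεdef, hnum0]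
        simp only [this, hNdef, if_pos hx, zero_mul]
        exact tendsto_const_nhds
      · have hgpos : 0 < g x := lt_of_le_of_ne (hg0 x) (Ne.symm hx)
        have hsq : Real.sqrt (g x) ≠ 0 := ne_of_gt (Real.sqrt_pos.mpr hgpos)
        have h1 : Tendsto (fun n => sε n x) atTop (𝓝 (num x / Real.sqrt (g x))) :=
          (tendsto_const_nhds.div (hrεlim x) hsq)
        simp only [hNdef, if_neg hx]
        exact h1.mul_const (η x)
  -- combine
  have hlim : Tendsto (fun n => (∫ x, sε n x * η x) + (∫ x, rε n x * η' x)) atTop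
      (𝓝 ((∫ x, N x * η x) + ∫ x, Real.sqrt (g x) * η' x)) := hDCT1.add hDCT2
  have hzero : Tendsto (fun _ : ℕ => (0:ℝ)) atTop
      (𝓝 ((∫ x, N x * η x) + ∫ x, Real.sqrt (g x) * η' x)) := by
    refine hlim.congr fun n => (hkey n).symm ▸ rfl
  have := tendsto_nhds_unique hzero tendsto_const_nhds
  linarith [this]

/-- Reduction from `S²`-valued to `S¹`-valued maps: with
`m̃ = (m₁, √(m₂² + m₃²), 0)`, one has `m̃` circle-valued and `F(m) ≥ F(m̃)`;
in the equality case with `m₂² + m₃² > 0` everywhere, the direction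
`(m₂, m₃)/√(m₂² + m₃²)` is constant. -/
theorem statement16 (a m₁ m₂ m₃ m₁' m₂' m₃' : ℝ → ℝ) (A₀ a₀ : ℝ) (ha₀ : 0 < a₀)
    (hameas : Measurable a)
    (hbd : ∀ᵐ x, a₀ ≤ a x ∧ a x ≤ A₀)
    (hsph : ∀ x, (m₁ x) ^ 2 + (m₂ x) ^ 2 + (m₃ x) ^ 2 = 1)
    (hd1 : ∀ x, HasDerivAt m₁ (m₁' x) x)
    (hd2 : ∀ x, HasDerivAt m₂ (m₂' x) x)
    (hd3 : ∀ x, HasDerivAt m₃ (m₃' x) x)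
    (hL2 : Integrable (fun x => (m₁' x) ^ 2 + (m₂' x) ^ 2 + (m₃' x) ^ 2))
    (hpot : Integrable (fun x => a x * ((m₂ x) ^ 2 + (m₃ x) ^ 2))) :
    (∀ x, (m₁ x) ^ 2 + Real.sqrt ((m₂ x) ^ 2 + (m₃ x) ^ 2) ^ 2 = 1) ∧
    ∃ n' : ℝ → ℝ,
      (∀ η η' : ℝ → ℝ, ContDiff ℝ (⊤ : ℕ∞) η → HasCompactSupport η →
        (∀ x, HasDerivAt η (η' x) x) →
        (∫ x, Real.sqrt ((m₂ x) ^ 2 + (m₃ x) ^ 2) * η' x) = -∫ x, n' x * η x) ∧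
      (∀ᵐ x, (n' x) ^ 2 ≤ (m₂' x) ^ 2 + (m₃' x) ^ 2) ∧
      (∫⁻ x, ENNReal.ofReal (a x * ((m₁' x) ^ 2 + (n' x) ^ 2)
            + a x * ((m₂ x) ^ 2 + (m₃ x) ^ 2)))
        ≤ ∫⁻ x, ENNReal.ofReal (a x * ((m₁' x) ^ 2 + (m₂' x) ^ 2 + (m₃' x) ^ 2)
            + a x * ((m₂ x) ^ 2 + (m₃ x) ^ 2)) ∧
      (((∫⁻ x, ENNReal.ofReal (a x * ((m₁' x) ^ 2 + (n' x) ^ 2)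
            + a x * ((m₂ x) ^ 2 + (m₃ x) ^ 2)))
          = ∫⁻ x, ENNReal.ofReal (a x * ((m₁' x) ^ 2 + (m₂' x) ^ 2 + (m₃' x) ^ 2)
            + a x * ((m₂ x) ^ 2 + (m₃ x) ^ 2))) →
        (∀ x, 0 < (m₂ x) ^ 2 + (m₃ x) ^ 2) →
        ∃ c : ℝ × ℝ, ∀ x,
          (m₂ x / Real.sqrt ((m₂ x) ^ 2 + (m₃ x) ^ 2),
           m₃ x / Real.sqrt ((m₂ x) ^ 2 + (m₃ x) ^ 2)) = c) := by
  have hg0 : ∀ x, 0 ≤ (m₂ x) ^ 2 + (m₃ x) ^ 2 := fun x => by positivity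
  have hgle1 : ∀ x, (m₂ x) ^ 2 + (m₃ x) ^ 2 ≤ 1 := fun x => by
    nlinarith [hsph x, sq_nonneg (m₁ x)]
  have hm1' : Measurable m₁' := by
    have h : m₁' = deriv m₁ := funext fun x => ((hd1 x).deriv).symm
    rw [h]; exact measurable_deriv _
  have hm2' : Measurable m₂' := by
    have h : m₂' = deriv m₂ := funext fun x => ((hd2 x).deriv).symm
    rw [h]; exact measurable_deriv _
  have hm3' : Measurable m₃' := by
    have h : m₃' = deriv m₃ := funext fun x => ((hd3 x).deriv).symm
    rw [h]; exact measurable_deriv _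
  have hc2 : Continuous m₂ := by
    rw [continuous_iff_continuousAt]; exact fun x => (hd2 x).continuousAt
  have hc3 : Continuous m₃ := by
    rw [continuous_iff_continuousAt]; exact fun x => (hd3 x).continuousAt
  have hgc : Continuous (fun x => (m₂ x) ^ 2 + (m₃ x) ^ 2) := by fun_prop
  set N : ℝ → ℝ := fun x => if (m₂ x) ^ 2 + (m₃ x) ^ 2 = 0 then 0
      else (m₂ x * m₂' x + m₃ x * m₃' x) / Real.sqrt ((m₂ x) ^ 2 + (m₃ x) ^ 2)
    with hNdef
  have hNmeas : Measurable N := by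
    apply Measurable.ite (hgc.measurable (measurableSet_singleton 0)) measurable_const
    exact ((hc2.measurable.mul hm2').add (hc3.measurable.mul hm3')).div
      (Real.continuous_sqrt.comp hgc).measurable
  have hptw : ∀ x, (N x) ^ 2 ≤ (m₂' x) ^ 2 + (m₃' x) ^ 2 := by
    intro x
    by_cases hx : (m₂ x) ^ 2 + (m₃ x) ^ 2 = 0
    · have hNx : N x = 0 := by simp only [hNdef]; rw [if_pos hx]
      rw [hNx]
      nlinarith [sq_nonneg (m₂' x), sq_nonneg (m₃' x)]
    · have hgpos : 0 < (m₂ x) ^ 2 + (m₃ x) ^ 2 := lt_of_le_of_ne (hg0 x) (Ne.symm hx)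
      simp only [hNdef, if_neg hx]
      rw [div_pow, Real.sq_sqrt (hg0 x), div_le_iff₀ hgpos]
      nlinarith [sq_nonneg (m₂ x * m₃' x - m₃ x * m₂' x)]
  have hL2' : Integrable (fun x => (m₂' x) ^ 2 + (m₃' x) ^ 2) := by
    apply hL2.mono' ((hm2'.pow_const 2).add (hm3'.pow_const 2)).aestronglyMeasurable
    apply ae_of_all
    intro x
    simp only [Pi.add_apply]
    rw [Real.norm_eq_abs, abs_of_nonneg (by positivity)]
    nlinarith [sq_nonneg (m₁' x)]
  refine ⟨fun x => by rw [Real.sq_sqrt (hg0 x)]; linarith [hsph x], N, ?_, ae_of_all _ hptw, ?_, ?_⟩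
  · -- weak derivative
    intro η η' hη hηc hdη
    have hη'eq : η' = deriv η := funext fun x => ((hdη x).deriv).symm
    have hη'c : Continuous η' := by
      rw [hη'eq]; exact hη.continuous_deriv (by simp)
    exact aux_weak_deriv m₂ m₃ m₂' m₃' hd2 hd3 hgle1 hm2' hm3' hL2' η η'
      hη.continuous hη'c hηc hdη
  · -- inequality
    apply lintegral_mono_ae
    filter_upwards [hbd] with x hx
    apply ENNReal.ofReal_le_ofReal
    have ha : (0:ℝ) ≤ a x := le_trans ha₀.le hx.1
    nlinarith [mul_le_mul_of_nonneg_left (hptw x) ha]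
  · -- equality case
    intro heq hpos
    have hsqpos : ∀ x, 0 < Real.sqrt ((m₂ x) ^ 2 + (m₃ x) ^ 2) :=
      fun x => Real.sqrt_pos.mpr (hpos x)
    -- measurability of the two ENNReal integrands
    have hFmeas : Measurable (fun x => ENNReal.ofReal (a x * ((m₁' x) ^ 2 + (N x) ^ 2)
        + a x * ((m₂ x) ^ 2 + (m₃ x) ^ 2))) := by
      apply ENNReal.measurable_ofReal.comp
      exact ((hameas.mul ((hm1'.pow_const 2).add (hNmeas.pow_const 2))).add
        (hameas.mul hgc.measurable))
    have hGmeas : Measurable (fun x => ENNReal.ofReal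
        (a x * ((m₁' x) ^ 2 + (m₂' x) ^ 2 + (m₃' x) ^ 2)
        + a x * ((m₂ x) ^ 2 + (m₃ x) ^ 2))) := by
      apply ENNReal.measurable_ofReal.comp
      exact ((hameas.mul (((hm1'.pow_const 2).add (hm2'.pow_const 2)).add
        (hm3'.pow_const 2))).add (hameas.mul hgc.measurable))
    have hle_ae : (fun x => ENNReal.ofReal (a x * ((m₁' x) ^ 2 + (N x) ^ 2)
          + a x * ((m₂ x) ^ 2 + (m₃ x) ^ 2)))
        ≤ᶠ[ae volume] (fun x => ENNReal.ofReal
          (a x * ((m₁' x) ^ 2 + (m₂' x) ^ 2 + (m₃' x) ^ 2)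
          + a x * ((m₂ x) ^ 2 + (m₃ x) ^ 2))) := by
      filter_upwards [hbd] with x hx
      apply ENNReal.ofReal_le_ofReal
      have ha : (0:ℝ) ≤ a x := le_trans ha₀.le hx.1
      nlinarith [mul_le_mul_of_nonneg_left (hptw x) ha]
    have hFfin : (∫⁻ x, ENNReal.ofReal (a x * ((m₁' x) ^ 2 + (N x) ^ 2)
        + a x * ((m₂ x) ^ 2 + (m₃ x) ^ 2))) ≠ ⊤ := by
      rw [heq]
      have hInt : Integrable (fun x =>
          A₀ * ((m₁' x) ^ 2 + (m₂' x) ^ 2 + (m₃' x) ^ 2)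
          + a x * ((m₂ x) ^ 2 + (m₃ x) ^ 2)) := (hL2.const_mul A₀).add hpot
      apply ne_of_lt
      apply lt_of_le_of_lt _ hInt.lintegral_lt_top
      apply lintegral_mono_ae
      filter_upwards [hbd] with x hx
      apply ENNReal.ofReal_le_ofReal
      have hS : (0:ℝ) ≤ (m₁' x) ^ 2 + (m₂' x) ^ 2 + (m₃' x) ^ 2 := by positivity
      nlinarith [mul_le_mul_of_nonneg_right hx.2 hS]
    have hsub : (∫⁻ x, ((fun x => ENNReal.ofReal
          (a x * ((m₁' x) ^ 2 + (m₂' x) ^ 2 + (m₃' x) ^ 2)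
          + a x * ((m₂ x) ^ 2 + (m₃ x) ^ 2))) x
        - (fun x => ENNReal.ofReal (a x * ((m₁' x) ^ 2 + (N x) ^ 2)
          + a x * ((m₂ x) ^ 2 + (m₃ x) ^ 2))) x)) = 0 := by
      rw [lintegral_sub hFmeas hFfin hle_ae, ← heq, tsub_self]
    have hae0 := (lintegral_eq_zero_iff'
      ((hGmeas.sub hFmeas).aemeasurable)).mp hsub
    have hae_eq : ∀ᵐ x, (N x) ^ 2 = (m₂' x) ^ 2 + (m₃' x) ^ 2 := by
      filter_upwards [hae0, hle_ae, hbd] with x hx0 hxle hx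
      have ha : (0:ℝ) < a x := lt_of_lt_of_le ha₀ hx.1
      have hxeqEN : ENNReal.ofReal (a x * ((m₁' x) ^ 2 + (N x) ^ 2)
          + a x * ((m₂ x) ^ 2 + (m₃ x) ^ 2))
          = ENNReal.ofReal (a x * ((m₁' x) ^ 2 + (m₂' x) ^ 2 + (m₃' x) ^ 2)
          + a x * ((m₂ x) ^ 2 + (m₃ x) ^ 2)) := by
        have hle' := hxle
        have h0 : (ENNReal.ofReal (a x * ((m₁' x) ^ 2 + (m₂' x) ^ 2 + (m₃' x) ^ 2)
            + a x * ((m₂ x) ^ 2 + (m₃ x) ^ 2)))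
            - ENNReal.ofReal (a x * ((m₁' x) ^ 2 + (N x) ^ 2)
            + a x * ((m₂ x) ^ 2 + (m₃ x) ^ 2)) = 0 := hx0
        have := tsub_eq_zero_iff_le.mp h0
        exact le_antisymm hle' this
      have hA : (0:ℝ) ≤ a x * ((m₁' x) ^ 2 + (N x) ^ 2)
          + a x * ((m₂ x) ^ 2 + (m₃ x) ^ 2) :=
        add_nonneg (mul_nonneg ha.le (by positivity)) (mul_nonneg ha.le (by positivity))
      have hB : (0:ℝ) ≤ a x * ((m₁' x) ^ 2 + (m₂' x) ^ 2 + (m₃' x) ^ 2)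
          + a x * ((m₂ x) ^ 2 + (m₃ x) ^ 2) :=
        add_nonneg (mul_nonneg ha.le (by positivity)) (mul_nonneg ha.le (by positivity))
      have hreal := (ENNReal.ofReal_eq_ofReal_iff hA hB).mp hxeqEN
      have h5 : a x * ((N x) ^ 2) = a x * ((m₂' x) ^ 2 + (m₃' x) ^ 2) := by
        linear_combination hreal
      exact mul_left_cancel₀ (ne_of_gt ha) h5
    have hW : ∀ᵐ x, m₂ x * m₃' x - m₃ x * m₂' x = 0 := by
      filter_upwards [hae_eq] with x hx
      have hgx := hpos x
      have hxne : (m₂ x) ^ 2 + (m₃ x) ^ 2 ≠ 0 := ne_of_gt hgx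
      rw [hNdef] at hx
      simp only [if_neg hxne] at hx
      rw [div_pow, Real.sq_sqrt (hg0 x)] at hx
      have hx' : (m₂ x * m₂' x + m₃ x * m₃' x) ^ 2
          = ((m₂' x) ^ 2 + (m₃' x) ^ 2) * ((m₂ x) ^ 2 + (m₃ x) ^ 2) :=
        (div_eq_iff hxne).mp hx
      have h6 : (m₂ x * m₃' x - m₃ x * m₂' x) ^ 2 = 0 := by nlinarith
      exact pow_eq_zero_iff two_ne_zero |>.mp h6
    -- derivative of sqrt(g)
    have hdr : ∀ x, HasDerivAt (fun y => Real.sqrt ((m₂ y) ^ 2 + (m₃ y) ^ 2)) (N x) x := by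
      intro x
      have hgd : HasDerivAt (fun y => (m₂ y) ^ 2 + (m₃ y) ^ 2)
          (2 * m₂ x * m₂' x + 2 * m₃ x * m₃' x) x := by
        have h2 : HasDerivAt (fun y => (m₂ y) ^ 2 + (m₃ y) ^ 2) _ x :=
          ((hd2 x).pow 2).add ((hd3 x).pow 2)
        convert h2 using 1
        ring
      have := hgd.sqrt (ne_of_gt (hpos x))
      convert this using 1
      rw [hNdef]
      simp only [if_neg (ne_of_gt (hpos x))]
      rw [div_eq_div_iff (ne_of_gt (hsqpos x))
        (mul_pos two_pos (hsqpos x)).ne']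
      ring
    -- u and v
    have hdu : ∀ x, HasDerivAt (fun y => m₂ y / Real.sqrt ((m₂ y) ^ 2 + (m₃ y) ^ 2))
        ((m₂' x * Real.sqrt ((m₂ x) ^ 2 + (m₃ x) ^ 2) - m₂ x * N x)
          / Real.sqrt ((m₂ x) ^ 2 + (m₃ x) ^ 2) ^ 2) x :=
      fun x => (hd2 x).div (hdr x) (ne_of_gt (hsqpos x))
    have hdv : ∀ x, HasDerivAt (fun y => m₃ y / Real.sqrt ((m₂ y) ^ 2 + (m₃ y) ^ 2))
        ((m₃' x * Real.sqrt ((m₂ x) ^ 2 + (m₃ x) ^ 2) - m₃ x * N x)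
          / Real.sqrt ((m₂ x) ^ 2 + (m₃ x) ^ 2) ^ 2) x :=
      fun x => (hd3 x).div (hdr x) (ne_of_gt (hsqpos x))
    have hU0 : ∀ᵐ x, (m₂' x * Real.sqrt ((m₂ x) ^ 2 + (m₃ x) ^ 2) - m₂ x * N x)
        / Real.sqrt ((m₂ x) ^ 2 + (m₃ x) ^ 2) ^ 2 = 0 := by
      filter_upwards [hW] with x hWx
      have hs := hsqpos x
      have hsq : Real.sqrt ((m₂ x) ^ 2 + (m₃ x) ^ 2)
          * Real.sqrt ((m₂ x) ^ 2 + (m₃ x) ^ 2) = (m₂ x) ^ 2 + (m₃ x) ^ 2 :=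
        Real.mul_self_sqrt (hg0 x)
      have hnum : m₂' x * Real.sqrt ((m₂ x) ^ 2 + (m₃ x) ^ 2) - m₂ x * N x = 0 := by
        rw [hNdef]
        simp only [if_neg (ne_of_gt (hpos x))]
        rw [sub_eq_zero, ← mul_div_assoc, eq_div_iff (ne_of_gt hs)]
        linear_combination m₂' x * hsq - m₃ x * hWx
      rw [hnum, zero_div]
    have hV0 : ∀ᵐ x, (m₃' x * Real.sqrt ((m₂ x) ^ 2 + (m₃ x) ^ 2) - m₃ x * N x)
        / Real.sqrt ((m₂ x) ^ 2 + (m₃ x) ^ 2) ^ 2 = 0 := by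
      filter_upwards [hW] with x hWx
      have hs := hsqpos x
      have hsq : Real.sqrt ((m₂ x) ^ 2 + (m₃ x) ^ 2)
          * Real.sqrt ((m₂ x) ^ 2 + (m₃ x) ^ 2) = (m₂ x) ^ 2 + (m₃ x) ^ 2 :=
        Real.mul_self_sqrt (hg0 x)
      have hnum : m₃' x * Real.sqrt ((m₂ x) ^ 2 + (m₃ x) ^ 2) - m₃ x * N x = 0 := by
        rw [hNdef]
        simp only [if_neg (ne_of_gt (hpos x))]
        rw [sub_eq_zero, ← mul_div_assoc, eq_div_iff (ne_of_gt hs)]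
        linear_combination m₃' x * hsq + m₂ x * hWx
      rw [hnum, zero_div]
    have hu := aux_deriv_ae_zero_const _ _ hdu hU0
    have hv := aux_deriv_ae_zero_const _ _ hdv hV0
    exact ⟨(m₂ 0 / Real.sqrt ((m₂ 0) ^ 2 + (m₃ 0) ^ 2),
            m₃ 0 / Real.sqrt ((m₂ 0) ^ 2 + (m₃ 0) ^ 2)),
      fun x => by rw [Prod.mk.injEq]; exact ⟨hu x, hv x⟩⟩
end
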